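/- Let (X,r) be a finite non-degenerate involutive set-theoretic solution of the YBE whose structure group G(X,r) is nilpotent. Then G(X,r) is abelian and (X,r) is the trivial solution. -/

import Mathlib

/-- A left brace: an abelian group `(B,+)` and a group `(B,·)` with the
compatibility law `a·(b+c) + a = a·b + a·c`. -/
class LeftBrace (B : Type*) extends AddCommGroup B, Group B where
  left_compat : ∀ a b c : B, a * (b + c) + a = a * b + a * c

variable {B : Type*} [LeftBrace B]

/-- The star operation `a * b = a·b - a - b` of a left brace. -/
def bstar (a b : B) : B := a * b - a - b

/-- The map `L_a : b ↦ a·b - a`. -/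
def lmap (a b : B) : B := a * b - a

/-- The socle of a left brace. -/
def socle (B : Type*) [LeftBrace B] : Set B := {a : B | ∀ b : B, a * b = a + b}

/-- Iterated star products: `eStar a b m = a*(a*(⋯*(a*b)))` with `a` occurring `m` times. -/
def eStar (a : B) (b : B) : ℕ → B
  | 0 => b
  | k + 1 => bstar a (eStar a b k)

/-- The additive subgroup generated by all `a*c` with `a ∈ A`, `c ∈ C`. -/
def starSub (A C : AddSubgroup B) : AddSubgroup B :=
  AddSubgroup.closure {x : B | ∃ a ∈ A, ∃ c ∈ C, x = bstar a c}

/-- Rump's left chain: `leftPow B n = B^{n+1}`, i.e. `B^1 = B`, `B^{n+1} = B * B^n`. -/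
def leftPow (B : Type*) [LeftBrace B] : ℕ → AddSubgroup B
  | 0 => ⊤
  | n + 1 => starSub ⊤ (leftPow B n)

/-- Rump's right chain: `rightPow B n = B^{(n+1)}`, i.e. `B^{(1)} = B`, `B^{(n+1)} = B^{(n)} * B`. -/
def rightPow (B : Type*) [LeftBrace B] : ℕ → AddSubgroup B
  | 0 => ⊤
  | n + 1 => starSub (rightPow B n) ⊤

/-- The commutator `[g,h] = g⁻¹h⁻¹gh`. -/
def pcomm {G : Type*} [Group G] (g h : G) : G := g⁻¹ * h⁻¹ * g * h

/-- Iterated commutator `engel g h n = [[…[[g,h],h]…],h]` with `h` occurring `n` times. -/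
def engel {G : Type*} [Group G] (g h : G) : ℕ → G
  | 0 => g
  | k + 1 => pcomm (engel g h k) h

/-- A group is Engel if every iterated commutator eventually vanishes. -/
def IsEngelGroup (G : Type*) [Group G] : Prop :=
  ∀ g h : G, ∃ n : ℕ, 0 < n ∧ engel g h n = 1

def r12 {X : Type*} (r : X × X → X × X) : X × X × X → X × X × X :=
  fun p => ((r (p.1, p.2.1)).1, (r (p.1, p.2.1)).2, p.2.2)

def r23 {X : Type*} (r : X × X → X × X) : X × X × X → X × X × X :=
  fun p => (p.1, r p.2)

/-- A non-degenerate involutive set-theoretic solution of the Yang–Baxter equation. -/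
structure YBSolution (X : Type u) where
  r : X × X → X × X
  ybe : r12 r ∘ r23 r ∘ r12 r = r23 r ∘ r12 r ∘ r23 r
  nondegL : ∀ x : X, Function.Bijective fun y => (r (x, y)).1
  nondegR : ∀ y : X, Function.Bijective fun x => (r (x, y)).2
  involutive : ∀ p : X × X, r (r p) = p

/-- `G`, with its left brace structure and the map `ι : X → G`, is the structure group
`G(X,r)` with its canonical left brace structure: `ι` is injective, `(G,+)` is free
abelian with basis `ι(X)`, `ˣy = L_x(y)` holds, the defining relations hold, and `G`
has the universal property of the group presented by these relations. -/
structure IsCanonicalBrace {X : Type u} (sol : YBSolution X) (G : Type u) [LeftBrace G]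
    (ι : X → G) : Prop where
  inj : Function.Injective ι
  basis : ∃ b : Module.Basis X ℤ G, ∀ x : X, b x = ι x
  act : ∀ x y : X, lmap (ι x) (ι y) = ι (sol.r (x, y)).1
  rel : ∀ x y : X, ι x * ι y = ι (sol.r (x, y)).1 * ι (sol.r (x, y)).2
  univ : ∀ {H : Type u} [Group H] (f : X → H),
    (∀ x y : X, f x * f y = f (sol.r (x, y)).1 * f (sol.r (x, y)).2) →
    ∃! φ : G →* H, ∀ x : X, φ (ι x) = f x


/-!
The lambda map `g ↦ lmap g` of the brace `G(X,r)` factors through the finite group of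
permutations of the basis `ι(X)`, so the socle has finite index; on the socle `a·b = a + b`, so it
is abelian and, like `(G,+)`, torsion-free. A central element fixes the socle pointwise, and the
socle contains a nonzero multiple of every element, so by torsion-freeness the center lies in the
socle. If `⁅g, h⁆` is central then `⁅gⁿ, hⁿ⁆ = ⁅g, h⁆^(n²)`; taking `n` the index of the socle,
`gⁿ` and `hⁿ` commute, so the torsion-free center absorbs the next term of the upper central
series. Hence a nilpotent `G` is abelian, `G` is its own socle, and `r(x, y) = (y, x)`.
-/
section NilpotentGroup

open Subgroup
open scoped commutatorElement

variable {G : Type*} [Group G]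

theorem commutatorElement_pow_right_of_mem_center {g h : G} (hc : ⁅g, h⁆ ∈ center G) (n : ℕ) :
    ⁅g, h ^ n⁆ = ⁅g, h⁆ ^ n := by
  induction n with
  | zero => simp
  | succ n ih =>
    calc ⁅g, h ^ (n + 1)⁆ = ⁅g, h ^ n⁆ * (h ^ n * ⁅g, h⁆ * (h ^ n)⁻¹) := by
          simp only [commutatorElement_def]; group
      _ = ⁅g, h⁆ ^ (n + 1) := by
          rw [mem_center_iff.mp hc (h ^ n), mul_inv_cancel_right, ih, pow_succ]

theorem commutatorElement_pow_left_of_mem_center {g h : G} (hc : ⁅g, h⁆ ∈ center G) (n : ℕ) :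
    ⁅g ^ n, h⁆ = ⁅g, h⁆ ^ n := by
  induction n with
  | zero => simp
  | succ n ih =>
    calc ⁅g ^ (n + 1), h⁆ = g * ⁅g ^ n, h⁆ * g⁻¹ * ⁅g, h⁆ := by
          simp only [commutatorElement_def]; group
      _ = ⁅g, h⁆ ^ (n + 1) := by
          rw [ih, mem_center_iff.mp (pow_mem hc n) g, mul_inv_cancel_right, pow_succ]

theorem mem_center_of_forall_commutatorElement_mem_center [IsMulTorsionFree (center G)]
    {n : ℕ} (hn : n ≠ 0) (hpow : ∀ g h : G, Commute (g ^ n) (h ^ n)) {g : G}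
    (hg : ∀ h, ⁅g, h⁆ ∈ center G) : g ∈ center G := by
  refine mem_center_iff.mpr fun h ↦ (commutatorElement_eq_one_iff_commute.mp ?_).symm.eq
  have hpow_comm : ⁅g, h⁆ ^ (n * n) = 1 := by
    rw [pow_mul, ← commutatorElement_pow_right_of_mem_center (hg h),
      ← commutatorElement_pow_left_of_mem_center (hg (h ^ n)),
      commutatorElement_eq_one_iff_commute]
    exact hpow g h
  have hcentral : (⟨⁅g, h⁆, hg h⟩ : center G) = 1 :=
    (pow_eq_one_iff_left (mul_ne_zero hn hn)).mp (Subtype.ext hpow_comm)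
  exact congrArg Subtype.val hcentral

/-- By induction with the previous lemma, the upper central series never leaves the center. -/
theorem commute_of_isNilpotent_of_pow_commute [Group.IsNilpotent G] [IsMulTorsionFree (center G)]
    {n : ℕ} (hn : n ≠ 0) (hpow : ∀ g h : G, Commute (g ^ n) (h ^ n)) (g h : G) : Commute g h := by
  have hseries : ∀ k, Subgroup.upperCentralSeries G k ≤ center G := by
    intro k
    induction k with
    | zero => simp
    | succ k ih =>
      intro g hg
      exact mem_center_of_forall_commutatorElement_mem_center hn hpow fun h ↦
        ih (Subgroup.mem_upperCentralSeries_succ_iff.mp hg h)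
  obtain ⟨k, hk⟩ := Group.IsNilpotent.nilpotent' (G := G)
  exact (mem_center_iff.mp (hseries k (hk ▸ mem_top g)) h).symm

end NilpotentGroup

namespace LeftBrace

theorem one_eq_zero : (1 : B) = 0 := by
  simpa using left_compat (1 : B) 0 0

theorem lmap_def (a b : B) : lmap a b = a * b - a := rfl

theorem mul_eq_add_lmap (a b : B) : a * b = a + lmap a b := by
  rw [lmap_def]; abel

theorem lmap_add (a b c : B) : lmap a (b + c) = lmap a b + lmap a c := by
  simp only [lmap_def, eq_sub_of_add_eq (left_compat a b c)]; abel

def lmapHom (a : B) : B →+ B := AddMonoidHom.mk' (lmap a) (lmap_add a)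

theorem lmap_neg (a b : B) : lmap a (-b) = -lmap a b := map_neg (lmapHom a) b

theorem lmap_sub (a b c : B) : lmap a (b - c) = lmap a b - lmap a c := map_sub (lmapHom a) b c

theorem lmap_nsmul (a : B) (n : ℕ) (b : B) : lmap a (n • b) = n • lmap a b :=
  map_nsmul (lmapHom a) n b

theorem lmap_one (c : B) : lmap 1 c = c := by
  rw [lmap_def, one_mul, one_eq_zero, sub_zero]

theorem lmap_mul (a b c : B) : lmap (a * b) c = lmap a (lmap b c) := by
  rw [lmap_def b, lmap_sub]
  simp only [lmap_def, mul_assoc]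
  abel

theorem lmap_inv_lmap (a c : B) : lmap a⁻¹ (lmap a c) = c := by
  rw [← lmap_mul, inv_mul_cancel, lmap_one]

theorem lmap_lmap_inv (a c : B) : lmap a (lmap a⁻¹ c) = c := by
  rw [← lmap_mul, mul_inv_cancel, lmap_one]

theorem inv_mul_eq_lmap_neg_add (g h : B) : g⁻¹ * h = lmap g⁻¹ (-g + h) := by
  rw [mul_eq_add_lmap, lmap_add, lmap_neg, lmap_def g⁻¹ g, inv_mul_cancel, one_eq_zero]
  abel

variable (B) in
def lambda : B →* Equiv.Perm B where
  toFun a := ⟨lmap a, lmap a⁻¹, lmap_inv_lmap a, lmap_lmap_inv a⟩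
  map_one' := Equiv.ext lmap_one
  map_mul' a b := Equiv.ext (lmap_mul a b)

variable (B) in
def socleSubgroup : Subgroup B := (lambda B).ker

instance : (socleSubgroup B).Normal := MonoidHom.normal_ker _

theorem mem_socleSubgroup {a : B} : a ∈ socleSubgroup B ↔ ∀ c, lmap a c = c := by
  simp [socleSubgroup, MonoidHom.mem_ker, Equiv.ext_iff, lambda]

section Socle

variable {a s : B}

theorem mul_eq_add_of_mem_socleSubgroup (ha : a ∈ socleSubgroup B) (b : B) : a * b = a + b := by
  rw [mul_eq_add_lmap, mem_socleSubgroup.mp ha b]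

theorem commute_of_mem_socleSubgroup {b : B} (ha : a ∈ socleSubgroup B)
    (hb : b ∈ socleSubgroup B) : Commute a b := by
  rw [Commute, SemiconjBy, mul_eq_add_of_mem_socleSubgroup ha, mul_eq_add_of_mem_socleSubgroup hb,
    add_comm]

theorem conj_eq_lmap_of_mem_socleSubgroup (hs : s ∈ socleSubgroup B) (g : B) :
    g * s * g⁻¹ = lmap g s := by
  have hg : g + lmap g g⁻¹ = 0 := by rw [← mul_eq_add_lmap, mul_inv_cancel, one_eq_zero]
  calc g * s * g⁻¹ = g + lmap g (s + g⁻¹) := by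
        rw [mul_assoc, mul_eq_add_lmap g, mul_eq_add_of_mem_socleSubgroup hs]
    _ = lmap g s + (g + lmap g g⁻¹) := by rw [lmap_add]; abel
    _ = lmap g s := by rw [hg, add_zero]

theorem lmap_mem_socleSubgroup (hs : s ∈ socleSubgroup B) (g : B) :
    lmap g s ∈ socleSubgroup B :=
  conj_eq_lmap_of_mem_socleSubgroup hs g ▸ Subgroup.Normal.conj_mem inferInstance s hs g

/-- The left cosets of the socle in `(B, ·)` and in `(B, +)` coincide. -/
theorem inv_mul_mem_socleSubgroup_iff {g h : B} :
    g⁻¹ * h ∈ socleSubgroup B ↔ -g + h ∈ socleSubgroup B := by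
  rw [inv_mul_eq_lmap_neg_add]
  refine ⟨fun hs ↦ ?_, fun hs ↦ lmap_mem_socleSubgroup hs g⁻¹⟩
  simpa only [lmap_lmap_inv] using lmap_mem_socleSubgroup hs g

variable (B) in
def socleAddSubgroup : AddSubgroup B where
  carrier := socleSubgroup B
  zero_mem' := one_eq_zero (B := B) ▸ (socleSubgroup B).one_mem
  add_mem' {a b} ha hb := mul_eq_add_of_mem_socleSubgroup ha b ▸ (socleSubgroup B).mul_mem ha hb
  neg_mem' {a} ha := by
    have hneg : -a = a⁻¹ := neg_eq_of_add_eq_zero_right <| by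
      rw [← mul_eq_add_of_mem_socleSubgroup ha, mul_inv_cancel, one_eq_zero]
    exact hneg ▸ (socleSubgroup B).inv_mem ha

theorem index_socleAddSubgroup : (socleAddSubgroup B).index = (socleSubgroup B).index :=
  Nat.card_congr <| Quotient.congrRight fun g h ↦ by
    rw [QuotientAddGroup.leftRel_apply, QuotientGroup.leftRel_apply]
    exact inv_mul_mem_socleSubgroup_iff.symm

variable (B) in
def socleSubgroupToMultiplicative : socleSubgroup B →* Multiplicative B where
  toFun a := Multiplicative.ofAdd a.1
  map_one' := congrArg Multiplicative.ofAdd one_eq_zero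
  map_mul' a b := congrArg Multiplicative.ofAdd (mul_eq_add_of_mem_socleSubgroup a.2 b)

instance [IsAddTorsionFree B] : IsMulTorsionFree (socleSubgroup B) :=
  Function.Injective.isMulTorsionFree (socleSubgroupToMultiplicative B) fun _ _ h ↦
    Subtype.ext (Multiplicative.ofAdd.injective h)

end Socle

/-- A central element fixes the socle pointwise, and the socle contains a nonzero multiple of
every element. -/
theorem center_le_socleSubgroup [IsAddTorsionFree B] [(socleSubgroup B).FiniteIndex] :
    Subgroup.center B ≤ socleSubgroup B := by
  intro z hz
  have hfix : ∀ s ∈ socleSubgroup B, lmap z s = s := by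
    intro s hs
    have h := Subgroup.mem_center_iff.mp hz s
    rw [mul_eq_add_of_mem_socleSubgroup hs, mul_eq_add_lmap, add_comm] at h
    exact (add_left_cancel h).symm
  refine mem_socleSubgroup.mpr fun c ↦ nsmul_right_injective
    (Subgroup.FiniteIndex.index_ne_zero (H := socleSubgroup B)) ?_
  have hmem : (socleSubgroup B).index • c ∈ socleSubgroup B :=
    index_socleAddSubgroup (B := B) ▸ (socleAddSubgroup B).nsmul_index_mem c
  simpa only [lmap_nsmul] using hfix _ hmem

theorem commute_of_isNilpotent [IsAddTorsionFree B] [(socleSubgroup B).FiniteIndex]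
    [Group.IsNilpotent B] (a b : B) : Commute a b :=
  have : IsMulTorsionFree (Subgroup.center B) :=
    (Subgroup.inclusion_injective center_le_socleSubgroup).isMulTorsionFree
      (Subgroup.inclusion center_le_socleSubgroup)
  commute_of_isNilpotent_of_pow_commute Subgroup.FiniteIndex.index_ne_zero
    (fun g h ↦ commute_of_mem_socleSubgroup ((socleSubgroup B).pow_index_mem g)
      ((socleSubgroup B).pow_index_mem h)) a b

end LeftBrace

namespace Module.Basis

variable {ι R M : Type*} [Semiring R] [AddCommMonoid M] [Module R M]

noncomputable def permHom (b : Basis ι R M) : Equiv.Perm ι →* Equiv.Perm M where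
  toFun σ := (b.equiv b σ).toEquiv
  map_one' := by ext; simp [Equiv.Perm.one_def, equiv_refl]
  map_mul' σ τ := by
    ext m
    rw [Equiv.Perm.mul_def, ← equiv_trans b b b]
    rfl

end Module.Basis

namespace IsCanonicalBrace

open LeftBrace

variable {X : Type u} {sol : YBSolution X} {G : Type u} [LeftBrace G] {ι : X → G}

theorem hom_ext (hG : IsCanonicalBrace sol G ι) {H : Type u} [Group H] {ψ₁ ψ₂ : G →* H}
    (h : ∀ x, ψ₁ (ι x) = ψ₂ (ι x)) : ψ₁ = ψ₂ :=
  (hG.univ (ψ₂ ∘ ι) fun x y ↦ by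
    simp only [Function.comp_apply]
    rw [← map_mul, ← map_mul, hG.rel]).unique h fun _ ↦ rfl

theorem closure_range_eq_top (hG : IsCanonicalBrace sol G ι) :
    Subgroup.closure (Set.range ι) = ⊤ := by
  set K := Subgroup.closure (Set.range ι)
  obtain ⟨φ, hφ, -⟩ := hG.univ (fun x ↦ (⟨ι x, Subgroup.subset_closure ⟨x, rfl⟩⟩ : K))
    fun x y ↦ Subtype.ext (hG.rel x y)
  have hsection : K.subtype.comp φ = MonoidHom.id G :=
    hG.hom_ext fun x ↦ congrArg Subtype.val (hφ x)
  rw [← K.range_subtype, MonoidHom.range_eq_top]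
  exact fun g ↦ ⟨φ g, DFunLike.congr_fun hsection g⟩

theorem isAddTorsionFree (hG : IsCanonicalBrace sol G ι) : IsAddTorsionFree G := by
  obtain ⟨b, -⟩ := hG.basis
  have := Module.Free.of_basis b
  exact .of_isTorsionFree ℤ G

/-- `lmap (ι x)` is the additive extension of the permutation `y ↦ (r (x, y)).1` of the basis. -/
theorem lambda_ι_mem_range_permHom (hG : IsCanonicalBrace sol G ι) {b : Module.Basis X ℤ G}
    (hb : ∀ x, b x = ι x) (x : X) : lambda G (ι x) ∈ b.permHom.range := by
  refine ⟨Equiv.ofBijective _ (sol.nondegL x), Equiv.ext fun c ↦ ?_⟩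
  have hlin : (b.equiv b (Equiv.ofBijective _ (sol.nondegL x))).toLinearMap =
      (lmapHom (ι x)).toIntLinearMap :=
    b.ext fun y ↦ by
      rw [LinearEquiv.coe_coe, Module.Basis.equiv_apply, hb, hb]
      exact (hG.act x y).symm
  exact LinearMap.congr_fun hlin c

theorem finiteIndex_socleSubgroup [Finite X] (hG : IsCanonicalBrace sol G ι) :
    (socleSubgroup G).FiniteIndex := by
  obtain ⟨b, hb⟩ := hG.basis
  have hle : (lambda G).range ≤ b.permHom.range := by
    rw [MonoidHom.range_eq_map, ← hG.closure_range_eq_top, MonoidHom.map_closure,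
      Subgroup.closure_le]
    rintro _ ⟨_, ⟨x, rfl⟩, rfl⟩
    exact hG.lambda_ι_mem_range_permHom hb x
  have : Finite b.permHom.range :=
    Finite.of_surjective _ b.permHom.rangeRestrict_surjective
  have : Finite (lambda G).range := Finite.of_injective _ (Subgroup.inclusion_injective hle)
  exact Subgroup.finiteIndex_ker (lambda G)

end IsCanonicalBrace

theorem stmt11 {X : Type u} [Finite X] (sol : YBSolution X)
    {G : Type u} [LeftBrace G] (ι : X → G) (hG : IsCanonicalBrace sol G ι)
    (hnilp : Group.IsNilpotent G) :
    (∀ g h : G, g * h = h * g) ∧ (∀ p : X × X, sol.r p = (p.2, p.1)) := by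
  have := hG.isAddTorsionFree
  have := hG.finiteIndex_socleSubgroup
  have hcomm (g h : G) : g * h = h * g := (LeftBrace.commute_of_isNilpotent g h).eq
  have hsoc (g c : G) : lmap g c = c := LeftBrace.mem_socleSubgroup.mp
    (LeftBrace.center_le_socleSubgroup (Subgroup.mem_center_iff.mpr fun h ↦ hcomm h g)) c
  refine ⟨hcomm, fun ⟨x, y⟩ ↦ ?_⟩
  have hfst : (sol.r (x, y)).1 = y := hG.inj (by rw [← hG.act, hsoc])
  have hsnd : (sol.r (x, y)).2 = x := by
    have hrel := hG.rel x y
    rw [hfst, hcomm] at hrel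
    exact hG.inj (mul_left_cancel hrel).symm
  exact Prod.ext hfst hsnd
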